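/- Define f : ℝ → ℝ by f(x) = ((1+x)/2)·log(1+x) + ((1−x)/2)·log(1−x). Then x ↦ f(x)/x² is monotone increasing on (0,1]: for all real x, y with 0 < x ≤ y ≤ 1, one has f(x)/x² ≤ f(y)/y². -/

import Mathlib

noncomputable section


open Real Set

/-- derivative of log(1+x) -/
lemma hasDerivAt_log_one_add {x : ℝ} (h : (1:ℝ) + x ≠ 0) :
    HasDerivAt (fun x : ℝ => Real.log (1 + x)) (1 / (1 + x)) x := by
  have := (Real.hasDerivAt_log h).comp x ((hasDerivAt_id x).const_add 1)
  simpa [one_div, Function.comp_def] using this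

lemma hasDerivAt_log_one_sub {x : ℝ} (h : (1:ℝ) - x ≠ 0) :
    HasDerivAt (fun x : ℝ => Real.log (1 - x)) (-(1 / (1 - x))) x := by
  have := (Real.hasDerivAt_log h).comp x ((hasDerivAt_id x).const_sub 1)
  refine this.congr_deriv ?_
  field_simp

/-- p(x) = x/(1-x²) - (1/2)(log(1+x)-log(1-x)) has derivative 2x²/(1-x²)². -/
lemma hasDerivAt_p {x : ℝ} (h1 : -1 < x) (h2 : x < 1) :
    HasDerivAt (fun x : ℝ => x / (1 - x^2) - (1/2) * (Real.log (1+x) - Real.log (1-x)))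
      (2 * x^2 / (1 - x^2)^2) x := by
  have ha : (1:ℝ) + x ≠ 0 := by nlinarith
  have hb : (1:ℝ) - x ≠ 0 := by nlinarith
  have hc : (1:ℝ) - x^2 ≠ 0 := by nlinarith
  have hq : HasDerivAt (fun x : ℝ => 1 - x^2) (-(2*x)) x := by
    simpa using (hasDerivAt_pow 2 x).const_sub 1
  have hdiv : HasDerivAt (fun x : ℝ => x / (1 - x^2))
      ((1 * (1 - x^2) - x * (-(2*x))) / (1 - x^2)^2) x :=
    (hasDerivAt_id x).div hq hc
  have hlog : HasDerivAt (fun x : ℝ => (1/2) * (Real.log (1+x) - Real.log (1-x)))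
      ((1/2) * (1/(1+x) - (-(1/(1-x))))) x :=
    (((hasDerivAt_log_one_add ha).sub (hasDerivAt_log_one_sub hb)).const_mul (1/2))
  have := hdiv.sub hlog
  refine this.congr_deriv ?_
  field_simp
  ring

lemma p_nonneg {x : ℝ} (hx : 0 ≤ x) (h2 : x < 1) :
    (1/2) * (Real.log (1+x) - Real.log (1-x)) ≤ x / (1 - x^2) := by
  set p : ℝ → ℝ := fun x => x / (1 - x^2) - (1/2) * (Real.log (1+x) - Real.log (1-x)) with hp
  have hmono : MonotoneOn p (Ico (0:ℝ) 1) := by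
    apply monotoneOn_of_deriv_nonneg (convex_Ico 0 1)
    · intro z hz
      exact (hasDerivAt_p (by linarith [hz.1]) hz.2).continuousAt.continuousWithinAt
    · intro z hz
      rw [interior_Ico] at hz
      exact (hasDerivAt_p (by linarith [hz.1]) hz.2).differentiableAt.differentiableWithinAt
    · intro z hz
      rw [interior_Ico] at hz
      rw [(hasDerivAt_p (by linarith [hz.1]) hz.2).deriv]
      have : (1:ℝ) - z^2 > 0 := by nlinarith [hz.1, hz.2]
      positivity
  have h0 : p 0 = 0 := by simp [hp]
  have := hmono (by constructor <;> norm_num) ⟨hx, h2⟩ hx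
  rw [h0] at this
  simpa [hp, sub_nonneg] using this

/-- derivative of fAsym -/
lemma hasDerivAt_fAsym {x : ℝ} (h1 : -1 < x) (h2 : x < 1) :
    HasDerivAt (fun x : ℝ => ((1 + x) / 2) * Real.log (1 + x) + ((1 - x) / 2) * Real.log (1 - x))
      ((1/2) * (Real.log (1+x) - Real.log (1-x))) x := by
  have ha : (1:ℝ) + x ≠ 0 := by nlinarith
  have hb : (1:ℝ) - x ≠ 0 := by nlinarith
  have h1' : HasDerivAt (fun x : ℝ => (1 + x)/2) (1/2) x := by
    simpa using (((hasDerivAt_id x).const_add 1).div_const 2)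
  have h2' : HasDerivAt (fun x : ℝ => (1 - x)/2) (-(1/2)) x := by
    simpa [neg_div] using (((hasDerivAt_id' x).const_sub 1).div_const 2)
  have t1 := h1'.mul (hasDerivAt_log_one_add ha)
  have t2 := h2'.mul (hasDerivAt_log_one_sub hb)
  have := t1.add t2
  refine this.congr_deriv ?_
  field_simp
  ring

/-- The binary-entropy-like function `f(x) = ((1+x)/2)·log(1+x) + ((1−x)/2)·log(1−x)`. -/
def fAsym (x : ℝ) : ℝ :=
  ((1 + x) / 2) * Real.log (1 + x) + ((1 - x) / 2) * Real.log (1 - x)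

lemma continuous_fAsym : Continuous fAsym := by
  have h1 : Continuous fun x : ℝ => (1+x) * Real.log (1+x) :=
    Real.continuous_mul_log.comp (by continuity)
  have h2 : Continuous fun x : ℝ => (1-x) * Real.log (1-x) :=
    Real.continuous_mul_log.comp (by continuity)
  have := (h1.add h2).div_const 2
  convert this using 1
  funext x
  simp only [fAsym, Pi.add_apply]
  ring

/-- h(x) = x·f'(x) − 2f(x) ≥ 0 on [0,1). -/
lemma two_fAsym_le {x : ℝ} (hx : 0 ≤ x) (h2 : x < 1) :
    2 * fAsym x ≤ x * ((1/2) * (Real.log (1+x) - Real.log (1-x))) := by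
  set h : ℝ → ℝ := fun x => x * ((1/2) * (Real.log (1+x) - Real.log (1-x))) - 2 * fAsym x
    with hdef
  have key : ∀ z : ℝ, -1 < z → z < 1 →
      HasDerivAt h (z / (1 - z^2) - (1/2) * (Real.log (1+z) - Real.log (1-z))) z := by
    intro z hz1 hz2
    have ha : (1:ℝ) + z ≠ 0 := by nlinarith
    have hb : (1:ℝ) - z ≠ 0 := by nlinarith
    have hc : (1:ℝ) - z^2 ≠ 0 := by nlinarith
    have hlog : HasDerivAt (fun x : ℝ => (1/2) * (Real.log (1+x) - Real.log (1-x)))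
        ((1/2) * (1/(1+z) - (-(1/(1-z))))) z :=
      (((hasDerivAt_log_one_add ha).sub (hasDerivAt_log_one_sub hb)).const_mul (1/2))
    have t1 := (hasDerivAt_id z).mul hlog
    have t2 := (hasDerivAt_fAsym hz1 hz2).const_mul 2
    have := t1.sub t2
    refine this.congr_deriv ?_
    field_simp
    simp only [id_eq]
    ring
  have hmono : MonotoneOn h (Ico (0:ℝ) 1) := by
    apply monotoneOn_of_deriv_nonneg (convex_Ico 0 1)
    · intro z hz
      exact (key z (by linarith [hz.1]) hz.2).continuousAt.continuousWithinAt
    · intro z hz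
      rw [interior_Ico] at hz
      exact (key z (by linarith [hz.1]) hz.2).differentiableAt.differentiableWithinAt
    · intro z hz
      rw [interior_Ico] at hz
      rw [(key z (by linarith [hz.1]) hz.2).deriv]
      have := p_nonneg (le_of_lt hz.1) hz.2
      linarith
  have h0 : h 0 = 0 := by simp [hdef, fAsym]
  have := hmono (by constructor <;> norm_num) ⟨hx, h2⟩ hx
  rw [h0] at this
  simpa [hdef, sub_nonneg] using this

/-- **`x ↦ f(x)/x²` is monotone increasing on `(0,1]`.** -/
theorem fAsym_div_sq_monotone (x y : ℝ) (hx : 0 < x) (hxy : x ≤ y) (hy : y ≤ 1) :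
    fAsym x / x ^ 2 ≤ fAsym y / y ^ 2 := by
  have hmono : MonotoneOn (fun x => fAsym x / x ^ 2) (Ioc (0:ℝ) 1) := by
    apply monotoneOn_of_deriv_nonneg (convex_Ioc 0 1)
    · exact (continuous_fAsym.continuousOn).div (continuous_pow 2).continuousOn
        (fun z hz => pow_ne_zero 2 (ne_of_gt hz.1))
    · intro z hz
      rw [interior_Ioc] at hz
      have hz2 : (z:ℝ)^2 ≠ 0 := pow_ne_zero 2 (ne_of_gt hz.1)
      have hf : HasDerivAt fAsym ((1/2) * (Real.log (1+z) - Real.log (1-z))) z :=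
        hasDerivAt_fAsym (by linarith [hz.1]) hz.2
      exact ((hf.div (hasDerivAt_pow 2 z) hz2)).differentiableAt.differentiableWithinAt
    · intro z hz
      rw [interior_Ioc] at hz
      have hz2 : (z:ℝ)^2 ≠ 0 := pow_ne_zero 2 (ne_of_gt hz.1)
      have hf : HasDerivAt fAsym ((1/2) * (Real.log (1+z) - Real.log (1-z))) z :=
        hasDerivAt_fAsym (by linarith [hz.1]) hz.2
      have hd := hf.div (hasDerivAt_pow 2 z) hz2
      rw [show (fun x => fAsym x / x ^ 2) = (fAsym / fun x => x ^ 2) from rfl]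
      rw [hd.deriv]
      have hnum : 0 ≤ (1/2) * (Real.log (1+z) - Real.log (1-z)) * z ^ 2
          - fAsym z * ((2:ℕ) * z ^ (2-1)) := by
        have := two_fAsym_le (le_of_lt hz.1) hz.2
        have hzpos := hz.1
        push_cast
        nlinarith
      have hden : (0:ℝ) < ((z ^ 2) ^ 2) := by positivity
      exact div_nonneg hnum (le_of_lt hden)
  exact hmono ⟨hx, le_trans hxy hy⟩ ⟨lt_of_lt_of_le hx hxy, hy⟩ hxy


end
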